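/- Let T be a triangulated category and M a rigid object. Let I be the ideal of pr(M) consisting of morphisms that factor through a morphism of the form ΣM₁ → M₂ with M₁, M₂ ∈ add(M). Then I² = 0, i.e. the composite of any two morphisms in I is zero. -/

import Mathlib

open CategoryTheory CategoryTheory.Limits CategoryTheory.Pretriangulated

universe v u

variable {C : Type u} [Category.{v} C] [Preadditive C] [HasZeroObject C]
  [HasShift C ℤ] [∀ n : ℤ, (shiftFunctor C n).Additive] [Pretriangulated C]
  [HasFiniteBiproducts C]

/-- `X` belongs to `add M`: it is a direct summand of a finite direct sum of copies of `M`. -/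
def InAdd (M X : C) : Prop :=
  ∃ (n : ℕ) (i : X ⟶ ⨁ (fun _ : Fin n => M)) (p : (⨁ (fun _ : Fin n => M)) ⟶ X),
    i ≫ p = 𝟙 X

/-- A morphism `w : X ⟶ ΣY` factors through an object of `add (ΣM)`. -/
def FactorsThroughAddShift (M : C) {X Y : C} (w : X ⟶ Y⟦(1 : ℤ)⟧) : Prop :=
  ∃ (Z : C), InAdd M Z ∧ ∃ (f : X ⟶ Z⟦(1 : ℤ)⟧) (g : Z⟦(1 : ℤ)⟧ ⟶ Y⟦(1 : ℤ)⟧),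
    w = f ≫ g

/-- `X` is finitely presented by `M`: there is a triangle `M⁻¹ → M⁰ → X → ΣM⁻¹`
with `M⁻¹, M⁰ ∈ add M`. -/
def Pr (M X : C) : Prop :=
  ∃ (Mm1 M0 : C), InAdd M Mm1 ∧ InAdd M M0 ∧
    ∃ (a : Mm1 ⟶ M0) (b : M0 ⟶ X) (c : X ⟶ Mm1⟦(1 : ℤ)⟧),
      Triangle.mk a b c ∈ distTriang C

/-- `f` lies in the ideal `I` of `pr(M)`: it factors through a morphism
`ΣM₁ ⟶ M₂` with `M₁, M₂ ∈ add M`. -/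
def InIdeal (M : C) {X Y : C} (f : X ⟶ Y) : Prop :=
  ∃ (M1 M2 : C), InAdd M M1 ∧ InAdd M M2 ∧
    ∃ (u : X ⟶ M1⟦(1 : ℤ)⟧) (s : M1⟦(1 : ℤ)⟧ ⟶ M2) (v : M2 ⟶ Y),
      f = u ≫ s ≫ v

/-! Rigidity of `M` passes to `add M`: every morphism `A ⟶ ΣB` with `A, B ∈ add M` vanishes.
In a composite `(u ≫ s ≫ v) ≫ (u' ≫ s' ≫ v')` of two morphisms of the ideal, the middle factor
`v ≫ u'` is such a morphism `M₂ ⟶ ΣM₁'`. -/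

section

variable {D E : Type*} [Category D] [Category E]

lemma CategoryTheory.Retract.hom_eq_zero [HasZeroMorphisms D] {X X' Y Y' : D}
    (rX : Retract X X') (rY : Retract Y Y') (h : ∀ f : X' ⟶ Y', f = 0) (f : X ⟶ Y) : f = 0 :=
  calc f = rX.i ≫ (rX.r ≫ f ≫ rY.i) ≫ rY.r := by simp
    _ = 0 := by rw [h (rX.r ≫ f ≫ rY.i)]; simp

lemma biproduct_hom_map_biproduct_eq_zero [Preadditive D] [Preadditive E]
    [HasFiniteBiproducts D] [HasFiniteBiproducts E] (F : D ⥤ E) [F.Additive]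
    {ι κ : Type} [Finite ι] [Finite κ] (A : ι → E) (B : κ → D)
    (h : ∀ i j (f : A i ⟶ F.obj (B j)), f = 0) (f : ⨁ A ⟶ F.obj (⨁ B)) : f = 0 := by
  rw [← cancel_mono (F.mapBiproduct B).hom, zero_comp]
  refine biproduct.hom_ext' _ _ fun i => biproduct.hom_ext _ _ fun j => ?_
  simpa using h i j _

variable [Preadditive D] [HasFiniteBiproducts D]

lemma InAdd.exists_retract {M X : D} (h : InAdd M X) :
    ∃ n : ℕ, Nonempty (Retract X (⨁ fun _ : Fin n => M)) :=
  let ⟨n, i, p, hip⟩ := h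
  ⟨n, ⟨⟨i, p, hip⟩⟩⟩

lemma InAdd.hom_eq_zero (F : D ⥤ D) [F.Additive] {M A B : D}
    (hM : ∀ f : M ⟶ F.obj M, f = 0) (hA : InAdd M A) (hB : InAdd M B) (f : A ⟶ F.obj B) :
    f = 0 := by
  obtain ⟨n, ⟨rA⟩⟩ := hA.exists_retract
  obtain ⟨m, ⟨rB⟩⟩ := hB.exists_retract
  exact rA.hom_eq_zero (rB.map F)
    (biproduct_hom_map_biproduct_eq_zero F _ _ fun _ _ => hM) f

end

theorem stmt7_general (M : C)
    (hrigid : ∀ f : M ⟶ M⟦(1 : ℤ)⟧, f = 0)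
    (X Y Z : C)
    (f : X ⟶ Y) (g : Y ⟶ Z) (hf : InIdeal M f) (hg : InIdeal M g) :
    f ≫ g = 0 := by
  obtain ⟨M₁, M₂, -, hM₂, u, s, v, rfl⟩ := hf
  obtain ⟨M₁', M₂', hM₁', -, u', s', v', rfl⟩ := hg
  have hvu' : v ≫ u' = 0 := hM₂.hom_eq_zero (shiftFunctor C (1 : ℤ)) hrigid hM₁' (v ≫ u')
  calc (u ≫ s ≫ v) ≫ u' ≫ s' ≫ v' = u ≫ s ≫ (v ≫ u') ≫ s' ≫ v' := by
        simp only [Category.assoc]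
    _ = 0 := by rw [hvu', zero_comp, comp_zero, comp_zero]

/-- For a rigid object `M`, the ideal `I` of `pr(M)` of morphisms
factoring through a morphism `ΣM₁ ⟶ M₂` with `M₁, M₂ ∈ add M` satisfies `I² = 0`. -/
theorem stmt7 (M : C)
    (hrigid : ∀ f : M ⟶ M⟦(1 : ℤ)⟧, f = 0)
    (X Y Z : C) (hX : Pr M X) (hY : Pr M Y) (hZ : Pr M Z)
    (f : X ⟶ Y) (g : Y ⟶ Z) (hf : InIdeal M f) (hg : InIdeal M g) :
    f ≫ g = 0 :=
  stmt7_general M hrigid X Y Z f g hf hg
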